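/- arXiv:1211.4191 — 4 statements merged into one kernel-verified Lean document; each statement's English description precedes it below -/
import Mathlib

section
/- Let N, M ≥ 1 and let f₀, f₁ : 𝔽₂^N → 𝔽₂ and g₀, g₁ : 𝔽₂^M → 𝔽₂ be arbitrary Boolean functions. Define h : 𝔽₂^N × 𝔽₂^M → 𝔽₂ by h(x,y) = f₀(x) ⊕ g₀(y) ⊕ (f₀(x)⊕f₁(x))·(g₀(y)⊕g₁(y)). Then for every a ∈ 𝔽₂^N and b ∈ 𝔽₂^M: 2·W_h(a,b) = W_{g₀}(b)·(W_{f₀}(a) + W_{f₁}(a)) + W_{g₁}(b)·(W_{f₀}(a) − W_{f₁}(a)). -/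
open Finset

/-- The sign `(-1)^b` for `b ∈ 𝔽₂`. -/
def chi (b : ZMod 2) : ℤ := if b = 0 then 1 else -1

/-- The Walsh transform of a Boolean function in `n` variables. -/
def walsh {n : ℕ} (f : (Fin n → ZMod 2) → ZMod 2) (ω : Fin n → ZMod 2) : ℤ :=
  ∑ x : Fin n → ZMod 2, chi (f x + ∑ i, ω i * x i)

/-- The Walsh transform of a Boolean function given on a product `𝔽₂ⁿ × 𝔽₂^m`. -/
def walsh2 {n m : ℕ} (f : (Fin n → ZMod 2) → (Fin m → ZMod 2) → ZMod 2)
    (α : Fin n → ZMod 2) (β : Fin m → ZMod 2) : ℤ :=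
  ∑ x : Fin n → ZMod 2, ∑ y : Fin m → ZMod 2,
    chi (f x y + (∑ i, α i * x i) + (∑ j, β j * y j))

/-- A Boolean function in `n` variables is bent if its Walsh transform only
takes the values `±2^(n/2)`. -/
def IsBent (n : ℕ) (f : (Fin n → ZMod 2) → ZMod 2) : Prop :=
  ∀ a, walsh f a = 2 ^ (n / 2) ∨ walsh f a = -(2 ^ (n / 2))

/-- Bentness for a function given on a product, i.e. as a function in `n + m` variables. -/
def IsBent2 (n m : ℕ) (f : (Fin n → ZMod 2) → (Fin m → ZMod 2) → ZMod 2) : Prop :=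
  ∀ α β, walsh2 f α β = 2 ^ ((n + m) / 2) ∨ walsh2 f α β = -(2 ^ ((n + m) / 2))

/-- `fd` is the dual of a bent function `f`:  `W_f(ω) = 2^(n/2) (−1)^{fd(ω)}`. -/
def IsDual {n : ℕ} (f fd : (Fin n → ZMod 2) → ZMod 2) : Prop :=
  ∀ ω, walsh f ω = 2 ^ (n / 2) * chi (fd ω)

/-- The dual for a bent function given on a product (a function of `n + m` variables). -/
def IsDual2 {n m : ℕ} (f fd : (Fin n → ZMod 2) → (Fin m → ZMod 2) → ZMod 2) : Prop :=
  ∀ α β, walsh2 f α β = 2 ^ ((n + m) / 2) * chi (fd α β)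

/-- Insert the bit `b` at position `μ`, giving a vector of length `n` from one of length `n-1`. -/
def insertAt {n : ℕ} (μ : Fin n) (b : ZMod 2) (x : Fin (n - 1) → ZMod 2) : Fin n → ZMod 2 :=
  fun i =>
    if h : (i : ℕ) < (μ : ℕ) then x ⟨i, by have := μ.isLt; omega⟩
    else if h' : (μ : ℕ) < (i : ℕ) then x ⟨(i : ℕ) - 1, by have := i.isLt; omega⟩
    else b

/-- Hamming weight of a vector in `𝔽₂ⁿ`. -/
def wt {n : ℕ} (ω : Fin n → ZMod 2) : ℕ := (Finset.univ.filter fun i => ω i ≠ 0).card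

/-- `t`-resiliency (with `t : ℤ`, so that the convention that every function is
`(-1)`-resilient holds). -/
def Resilient {n : ℕ} (t : ℤ) (f : (Fin n → ZMod 2) → ZMod 2) : Prop :=
  ∀ ω, (wt ω : ℤ) ≤ t → walsh f ω = 0

/-- `t`-resiliency for a function given on a product `𝔽₂ⁿ × 𝔽₂^m`. -/
def Resilient2 {n m : ℕ} (t : ℤ) (f : (Fin n → ZMod 2) → (Fin m → ZMod 2) → ZMod 2) : Prop :=
  ∀ α β, (wt α + wt β : ℤ) ≤ t → walsh2 f α β = 0

lemma chi_key (u v w z : ZMod 2) :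
    2 * chi (u + w + (u + v) * (w + z)) =
      chi w * (chi u + chi v) + chi z * (chi u - chi v) := by revert u v w z; decide

lemma arg_key (p q r s A B : ZMod 2) :
    p + q + (p + r) * (q + s) + A + B =
      (p + A) + (q + B) + ((p + A) + (r + A)) * ((q + B) + (s + B)) := by revert p q r s A B; decide

/-- Walsh transform of the indirect-sum type combination of four
arbitrary Boolean functions. -/
theorem walsh_indirect_sum_formula (N M : ℕ) (hN : 1 ≤ N) (hM : 1 ≤ M)
    (f0 f1 : (Fin N → ZMod 2) → ZMod 2) (g0 g1 : (Fin M → ZMod 2) → ZMod 2)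
    (h : (Fin N → ZMod 2) → (Fin M → ZMod 2) → ZMod 2)
    (hh : ∀ x y, h x y = f0 x + g0 y + (f0 x + f1 x) * (g0 y + g1 y))
    (a : Fin N → ZMod 2) (b : Fin M → ZMod 2) :
    2 * walsh2 h a b =
      walsh g0 b * (walsh f0 a + walsh f1 a) + walsh g1 b * (walsh f0 a - walsh f1 a) := by
  unfold walsh2 walsh
  rw [Finset.mul_sum]
  have step : ∀ x : Fin N → ZMod 2,
      2 * ∑ y : Fin M → ZMod 2, chi (h x y + (∑ i, a i * x i) + (∑ j, b j * y j)) =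
      ∑ y : Fin M → ZMod 2,
        (chi (g0 y + ∑ j, b j * y j) *
            (chi (f0 x + ∑ i, a i * x i) + chi (f1 x + ∑ i, a i * x i)) +
         chi (g1 y + ∑ j, b j * y j) *
            (chi (f0 x + ∑ i, a i * x i) - chi (f1 x + ∑ i, a i * x i))) := by
    intro x
    rw [Finset.mul_sum]
    refine Finset.sum_congr rfl fun y _ => ?_
    rw [hh, arg_key, chi_key]
  calc ∑ x : Fin N → ZMod 2,
        2 * ∑ y : Fin M → ZMod 2, chi (h x y + (∑ i, a i * x i) + (∑ j, b j * y j))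
      = ∑ x : Fin N → ZMod 2, ∑ y : Fin M → ZMod 2,
        (chi (g0 y + ∑ j, b j * y j) *
            (chi (f0 x + ∑ i, a i * x i) + chi (f1 x + ∑ i, a i * x i)) +
         chi (g1 y + ∑ j, b j * y j) *
            (chi (f0 x + ∑ i, a i * x i) - chi (f1 x + ∑ i, a i * x i))) := by
        exact Finset.sum_congr rfl fun x _ => step x
    _ = _ := by
        rw [Finset.sum_comm]
        simp only [Finset.sum_add_distrib, ← Finset.mul_sum, ← Finset.sum_mul]
        rw [Finset.sum_sub_distrib]
end

section
/- Let n and m be positive even integers, let f : 𝔽₂ⁿ → 𝔽₂ and g : 𝔽₂^m → 𝔽₂ be bent functions, let μ ∈ {1,…,n}, ρ ∈ {1,…,m}, let f₀, f₁ : 𝔽₂^{n−1} → 𝔽₂ be the restrictions of f at coordinate μ and g₀, g₁ : 𝔽₂^{m−1} → 𝔽₂ the restrictions of g at coordinate ρ. Then the function h : 𝔽₂^{n−1} × 𝔽₂^{m−1} → 𝔽₂ defined by h(x,y) = f₀(x) ⊕ g₀(y) ⊕ (f₀(x)⊕f₁(x))·(g₀(y)⊕g₁(y)) is a bent function in n+m−2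 variables. -/
open Finset

def ins {k : ℕ} (μ : Fin (k + 1)) (b : ZMod 2) (x : Fin k → ZMod 2) :
    Fin (k + 1) → ZMod 2 :=
  Fin.insertNth μ b x

lemma chi_add (u v : ZMod 2) : chi (u + v) = chi u * chi v := by revert u v; decide

lemma keyB (a b c d s t : ZMod 2) :
    2 * chi (a + c + (a + b) * (c + d) + s + t) =
      (chi (a + s) + chi (b + s)) * chi (c + t)
      + (chi (a + s) - chi (b + s)) * chi (d + t) := by
  revert a b c d s t; decide

lemma zmod2_sum (F : ZMod 2 → ℤ) : ∑ b : ZMod 2, F b = F 0 + F 1 :=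
  Fin.sum_univ_two F

lemma insertAt_same {k : ℕ} (μ : Fin (k + 1)) (b : ZMod 2) (x : Fin k → ZMod 2) :
    insertAt μ b x μ = b := by simp [insertAt]

lemma insertAt_succAbove {k : ℕ} (μ : Fin (k + 1)) (b : ZMod 2) (x : Fin k → ZMod 2)
    (j : Fin k) : insertAt μ b x (μ.succAbove j) = x j := by
  rcases lt_or_ge (Fin.castSucc j) μ with hlt | hle
  · rw [Fin.succAbove_of_castSucc_lt _ _ hlt]
    have hj : ((Fin.castSucc j : Fin (k+1)) : ℕ) = (j : ℕ) := rfl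
    have hlt' : ((Fin.castSucc j : Fin (k+1)) : ℕ) < (μ : ℕ) := hlt
    rw [insertAt, dif_pos hlt']
    exact congrArg x (Fin.ext (by simpa using hj))
  · rw [Fin.succAbove_of_le_castSucc _ _ hle]
    have hj : ((Fin.succ j : Fin (k+1)) : ℕ) = (j : ℕ) + 1 := rfl
    have h1 : ¬ ((Fin.succ j : Fin (k+1)) : ℕ) < (μ : ℕ) := by
      have : (μ : ℕ) ≤ (j : ℕ) := hle
      omega
    have h2 : (μ : ℕ) < ((Fin.succ j : Fin (k+1)) : ℕ) := by
      have : (μ : ℕ) ≤ (j : ℕ) := hle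
      omega
    rw [insertAt, dif_neg h1, dif_pos h2]
    exact congrArg x (Fin.ext (by simp [hj]))

lemma insertAt_eq {k : ℕ} (μ : Fin (k + 1)) (b : ZMod 2) (x : Fin k → ZMod 2) :
    insertAt μ b x = Fin.insertNth μ b x := by
  funext i
  refine Fin.succAboveCases μ ?_ ?_ i
  · rw [insertAt_same, Fin.insertNth_apply_same]
  · intro j
    rw [insertAt_succAbove, Fin.insertNth_apply_succAbove]

lemma insertAt_eq' {k : ℕ} (μ : Fin (k + 1)) (b : ZMod 2) (x : Fin k → ZMod 2) :
    insertAt μ b x = ins μ b x := insertAt_eq μ b x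

lemma dot_insertNth {k : ℕ} (μ : Fin (k + 1)) (ε b : ZMod 2)
    (α x : Fin k → ZMod 2) :
    ∑ i, ins μ ε α i * ins μ b x i
      = ε * b + ∑ j, α j * x j := by
  have h := Fin.sum_univ_succAbove
    (fun i => (ins μ ε α i) * (ins μ b x i)) μ
  simpa [ins, Fin.insertNth_apply_same, Fin.insertNth_apply_succAbove] using h

lemma sum_split {k : ℕ} (μ : Fin (k + 1)) (F : (Fin (k + 1) → ZMod 2) → ℤ) :
    ∑ v, F v = (∑ x : Fin k → ZMod 2, F (ins μ 0 x))
      + ∑ x : Fin k → ZMod 2, F (ins μ 1 x) := by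
  rw [← (Fin.insertNthEquiv (fun _ => ZMod 2) μ).sum_comp F, Fintype.sum_prod_type]
  rw [zmod2_sum (fun b => ∑ x : Fin k → ZMod 2,
      F ((Fin.insertNthEquiv (fun _ => ZMod 2) μ) (b, x)))]
  rfl

lemma walsh_insert {k : ℕ} (f : (Fin (k + 1) → ZMod 2) → ZMod 2) (μ : Fin (k + 1))
    (ε : ZMod 2) (α : Fin k → ZMod 2) :
    walsh f (ins μ ε α) =
      walsh (fun x => f (ins μ 0 x)) α
        + chi ε * walsh (fun x => f (ins μ 1 x)) α := by
  unfold walsh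
  rw [sum_split μ (fun v => chi (f v + ∑ i, ins μ ε α i * v i))]
  rw [Finset.mul_sum]
  congr 1
  · apply Finset.sum_congr rfl
    intro x _
    rw [dot_insertNth]
    ring_nf
  · apply Finset.sum_congr rfl
    intro x _
    rw [dot_insertNth]
    rw [show f (ins μ 1 x) + (ε * 1 + ∑ j, α j * x j)
        = ε + (f (ins μ 1 x) + ∑ j, α j * x j) by ring]
    rw [chi_add]

lemma walsh2_key {k l : ℕ}
    (f0 f1 : (Fin k → ZMod 2) → ZMod 2) (g0 g1 : (Fin l → ZMod 2) → ZMod 2)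
    (h : (Fin k → ZMod 2) → (Fin l → ZMod 2) → ZMod 2)
    (hh : ∀ x y, h x y = f0 x + g0 y + (f0 x + f1 x) * (g0 y + g1 y))
    (α : Fin k → ZMod 2) (β : Fin l → ZMod 2) :
    2 * walsh2 h α β =
      (walsh f0 α + walsh f1 α) * walsh g0 β
        + (walsh f0 α - walsh f1 α) * walsh g1 β := by
  unfold walsh2 walsh
  rw [Finset.mul_sum]
  have step : ∀ x : Fin k → ZMod 2,
      (2 * ∑ y : Fin l → ZMod 2, chi (h x y + (∑ i, α i * x i) + ∑ j, β j * y j))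
      = (chi (f0 x + ∑ i, α i * x i) + chi (f1 x + ∑ i, α i * x i))
          * ∑ y : Fin l → ZMod 2, chi (g0 y + ∑ j, β j * y j)
        + (chi (f0 x + ∑ i, α i * x i) - chi (f1 x + ∑ i, α i * x i))
          * ∑ y : Fin l → ZMod 2, chi (g1 y + ∑ j, β j * y j) := by
    intro x
    rw [Finset.mul_sum, Finset.mul_sum, Finset.mul_sum, ← Finset.sum_add_distrib]
    apply Finset.sum_congr rfl
    intro y _
    rw [hh]
    exact keyB (f0 x) (f1 x) (g0 y) (g1 y) _ _
  calc ∑ x : Fin k → ZMod 2,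
        2 * ∑ y : Fin l → ZMod 2, chi (h x y + (∑ i, α i * x i) + ∑ j, β j * y j)
      = ∑ x : Fin k → ZMod 2,
        ((chi (f0 x + ∑ i, α i * x i) + chi (f1 x + ∑ i, α i * x i))
          * ∑ y : Fin l → ZMod 2, chi (g0 y + ∑ j, β j * y j)
        + (chi (f0 x + ∑ i, α i * x i) - chi (f1 x + ∑ i, α i * x i))
          * ∑ y : Fin l → ZMod 2, chi (g1 y + ∑ j, β j * y j)) :=
        Finset.sum_congr rfl fun x _ => step x
    _ = _ := by
        rw [Finset.sum_add_distrib, ← Finset.sum_mul, ← Finset.sum_mul,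
          Finset.sum_add_distrib, Finset.sum_sub_distrib]

/-- the modified indirect sum of two bent functions, built from their
restrictions at coordinates `μ` and `ρ`, is bent in `n + m - 2` variables. -/
theorem bent_of_restriction_indirect_sum (n m : ℕ)
    (hn0 : 0 < n) (hm0 : 0 < m) (hn : Even n) (hm : Even m)
    (f : (Fin n → ZMod 2) → ZMod 2) (g : (Fin m → ZMod 2) → ZMod 2)
    (hf : IsBent n f) (hg : IsBent m g) (μ : Fin n) (ρ : Fin m)
    (f0 f1 : (Fin (n - 1) → ZMod 2) → ZMod 2)
    (g0 g1 : (Fin (m - 1) → ZMod 2) → ZMod 2)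
    (hf0 : ∀ x, f0 x = f (insertAt μ 0 x)) (hf1 : ∀ x, f1 x = f (insertAt μ 1 x))
    (hg0 : ∀ y, g0 y = g (insertAt ρ 0 y)) (hg1 : ∀ y, g1 y = g (insertAt ρ 1 y))
    (h : (Fin (n - 1) → ZMod 2) → (Fin (m - 1) → ZMod 2) → ZMod 2)
    (hh : ∀ x y, h x y = f0 x + g0 y + (f0 x + f1 x) * (g0 y + g1 y)) :
    IsBent2 (n - 1) (m - 1) h := by
  obtain ⟨k, rfl⟩ : ∃ k, n = k + 1 := ⟨n - 1, by omega⟩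
  obtain ⟨l, rfl⟩ : ∃ l, m = l + 1 := ⟨m - 1, by omega⟩
  obtain ⟨a, ha⟩ := hn
  obtain ⟨b, hb⟩ := hm
  intro α β
  simp only [Nat.add_sub_cancel]
  -- relate restricted Walsh transforms to full ones
  have hWf0 : walsh f0 α = walsh (fun x => f (ins μ 0 x)) α :=
    Finset.sum_congr rfl fun x _ => by rw [hf0, insertAt_eq']; rfl
  have hWf1 : walsh f1 α = walsh (fun x => f (ins μ 1 x)) α :=
    Finset.sum_congr rfl fun x _ => by rw [hf1, insertAt_eq']; rfl
  have hWg0 : walsh g0 β = walsh (fun y => g (ins ρ 0 y)) β :=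
    Finset.sum_congr rfl fun y _ => by rw [hg0, insertAt_eq']; rfl
  have hWg1 : walsh g1 β = walsh (fun y => g (ins ρ 1 y)) β :=
    Finset.sum_congr rfl fun y _ => by rw [hg1, insertAt_eq']; rfl
  have e0f : walsh f (ins μ 0 α) = walsh f0 α + walsh f1 α := by
    rw [walsh_insert, ← hWf0, ← hWf1]
    norm_num [chi]
  have e1f : walsh f (ins μ 1 α) = walsh f0 α - walsh f1 α := by
    rw [walsh_insert, ← hWf0, ← hWf1]
    have : chi 1 = -1 := rfl
    rw [this]; ring
  have e0g : walsh g (ins ρ 0 β) = walsh g0 β + walsh g1 β := by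
    rw [walsh_insert, ← hWg0, ← hWg1]
    norm_num [chi]
  have e1g : walsh g (ins ρ 1 β) = walsh g0 β - walsh g1 β := by
    rw [walsh_insert, ← hWg0, ← hWg1]
    have : chi 1 = -1 := rfl
    rw [this]; ring
  have key := walsh2_key f0 f1 g0 g1 h hh α β
  have key' : 2 * walsh2 h α β
      = walsh f (ins μ 0 α) * walsh g0 β + walsh f (ins μ 1 α) * walsh g1 β := by
    rw [e0f, e1f]; exact key
  have h4 : 4 * walsh2 h α β
      = walsh f (ins μ 0 α) * (walsh g (ins ρ 0 β) + walsh g (ins ρ 1 β))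
        + walsh f (ins μ 1 α) * (walsh g (ins ρ 0 β) - walsh g (ins ρ 1 β)) := by
    rw [e0g, e1g]; linear_combination 2 * key'
  have hPQ : (2:ℤ) ^ ((k + 1) / 2) * 2 ^ ((l + 1) / 2) = 2 * 2 ^ ((k + l) / 2) := by
    have hexp : (k + 1) / 2 + (l + 1) / 2 = (k + l) / 2 + 1 := by omega
    rw [← pow_add, hexp, pow_succ, mul_comm]
  have hcase : 4 * walsh2 h α β = 4 * 2 ^ ((k + l) / 2)
      ∨ 4 * walsh2 h α β = 4 * -(2 ^ ((k + l) / 2)) := by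
    rcases hf (ins μ 0 α) with hA0 | hA0 <;> rcases hf (ins μ 1 α) with hA1 | hA1 <;>
      rcases hg (ins ρ 0 β) with hB0 | hB0 <;> rcases hg (ins ρ 1 β) with hB1 | hB1 <;>
      rw [hA0, hA1, hB0, hB1] at h4 <;>
      first
        | (left; linear_combination h4 + 2 * hPQ)
        | (right; linear_combination h4 - 2 * hPQ)
  rcases hcase with hc | hc
  · left; linarith
  · right; linarith
end

section
/- Let n and m be positive even integers. Let f⁽¹⁾, f⁽²⁾, f⁽³⁾ : 𝔽₂ⁿ → 𝔽₂ be bent functions such that f⁽¹⁾ ⊕ f⁽²⁾ ⊕ f⁽³⁾ is bent, and let g⁽¹⁾, g⁽²⁾, g⁽³⁾ : 𝔽₂^m → 𝔽₂ be bent functions such that g⁽¹⁾ ⊕ g⁽²⁾ ⊕ g⁽³⁾ is bent. Then the function h of the n+m+2 variables (x, y, x_{n+1}, y_{m+1}) ∈ 𝔽₂ⁿ × 𝔽₂^m × 𝔽₂ × 𝔽₂ defined by h = f⁽¹⁾(x)f⁽²⁾(x) ⊕ f⁽¹⁾(x)f⁽³⁾(x) ⊕ f⁽²⁾(x)f⁽³⁾(x)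 ⊕ g⁽¹⁾(y)g⁽²⁾(y) ⊕ g⁽¹⁾(y)g⁽³⁾(y) ⊕ g⁽²⁾(y)g⁽³⁾(y) ⊕ (f⁽¹⁾(x)⊕f⁽²⁾(x))x_{n+1} ⊕ (g⁽¹⁾(y)⊕g⁽²⁾(y))y_{m+1} ⊕ (f⁽¹⁾(x)⊕f⁽³⁾(x))(g⁽¹⁾(y)⊕g⁽³⁾(y)) ⊕ (f⁽¹⁾(x)⊕f⁽³⁾(x))y_{m+1} ⊕ (g⁽¹⁾(y)⊕g⁽³⁾(y))x_{n+1} ⊕ x_{n+1}y_{m+1} is a bent function in n+m+2 variables. -/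
open Finset

lemma zmod2_cases : ∀ γ : ZMod 2, γ = 0 ∨ γ = 1 := by decide

lemma chi_pm : ∀ z : ZMod 2, chi z = 1 ∨ chi z = -1 := by decide

lemma key : ∀ (p q r' u v w γ δ A B : ZMod 2),
    (∑ s : ZMod 2, ∑ r : ZMod 2,
      chi (p*q + p*r' + q*r' + u*v + u*w + v*w + (p+q)*s + (u+v)*r + (p+r')*(u+w)
        + (p+r')*r + (u+w)*s + s*r + A + B + γ*s + δ*r))
    = chi (γ*δ) *
      ( chi (p + (p+q)*δ + (p+r')*γ + A) * chi (u + (u+w)*δ + (u+v)*γ + B)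
      + chi (p + (p+q)*δ + (p+r')*γ + A) * chi (u + (u+w)*δ + (u+v)*(γ+1) + B)
      + chi (p + (p+q)*(δ+1) + (p+r')*γ + A) * chi (u + (u+w)*δ + (u+v)*γ + B)
      - chi (p + (p+q)*(δ+1) + (p+r')*γ + A) * chi (u + (u+w)*δ + (u+v)*(γ+1) + B) ) := by
  decide

lemma epow (n m : ℕ) (hn : Even n) (hm : Even m) :
    (2:ℤ)^((n+m+2)/2) = 2 * ((2:ℤ)^(n/2) * 2^(m/2)) := by
  obtain ⟨k, hk⟩ := hn; obtain ⟨l, hl⟩ := hm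
  have h1 : (n+m+2)/2 = k + l + 1 := by omega
  have h2 : n/2 = k := by omega
  have h3 : m/2 = l := by omega
  rw [h1, h2, h3]; ring

lemma combine (A B c P P' Q Q' : ℤ) (hc : c = 1 ∨ c = -1)
    (hP : P = A ∨ P = -A) (hP' : P' = A ∨ P' = -A)
    (hQ : Q = B ∨ Q = -B) (hQ' : Q' = B ∨ Q' = -B) :
    c * (P * Q + P * Q' + P' * Q - P' * Q') = 2 * (A * B) ∨
    c * (P * Q + P * Q' + P' * Q - P' * Q') = -(2 * (A * B)) := by
  rcases hc with hc|hc <;> rcases hP with hP|hP <;> rcases hP' with hP'|hP' <;>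
    rcases hQ with hQ|hQ <;> rcases hQ' with hQ'|hQ' <;>
    rw [hc, hP, hP', hQ, hQ'] <;> (ring_nf; tauto)

/-- applying the modified indirect sum to two Rothaus constructions gives
a bent function in `n + m + 2` variables. -/
theorem bent_Rothaus_combination (n m : ℕ)
    (hn0 : 0 < n) (hm0 : 0 < m) (hn : Even n) (hm : Even m)
    (f1 f2 f3 : (Fin n → ZMod 2) → ZMod 2)
    (g1 g2 g3 : (Fin m → ZMod 2) → ZMod 2)
    (hf1 : IsBent n f1) (hf2 : IsBent n f2) (hf3 : IsBent n f3)
    (hf123 : IsBent n fun x => f1 x + f2 x + f3 x)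
    (hg1 : IsBent m g1) (hg2 : IsBent m g2) (hg3 : IsBent m g3)
    (hg123 : IsBent m fun y => g1 y + g2 y + g3 y)
    (h : (Fin n → ZMod 2) → (Fin m → ZMod 2) → ZMod 2 → ZMod 2 → ZMod 2)
    (hh : ∀ x y s r,
      h x y s r =
        f1 x * f2 x + f1 x * f3 x + f2 x * f3 x +
        g1 y * g2 y + g1 y * g3 y + g2 y * g3 y +
        (f1 x + f2 x) * s + (g1 y + g2 y) * r +
        (f1 x + f3 x) * (g1 y + g3 y) +
        (f1 x + f3 x) * r + (g1 y + g3 y) * s + s * r) :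
    ∀ (a : Fin n → ZMod 2) (b : Fin m → ZMod 2) (γ δ : ZMod 2),
      (∑ x : Fin n → ZMod 2, ∑ y : Fin m → ZMod 2, ∑ s : ZMod 2, ∑ r : ZMod 2,
          chi (h x y s r + (∑ i, a i * x i) + (∑ j, b j * y j) + γ * s + δ * r))
          = 2 ^ ((n + m + 2) / 2) ∨
      (∑ x : Fin n → ZMod 2, ∑ y : Fin m → ZMod 2, ∑ s : ZMod 2, ∑ r : ZMod 2,
          chi (h x y s r + (∑ i, a i * x i) + (∑ j, b j * y j) + γ * s + δ * r))
          = -(2 ^ ((n + m + 2) / 2)) := by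
  
  intro a b γ δ
  -- the main factorization step
  have step : (∑ x : Fin n → ZMod 2, ∑ y : Fin m → ZMod 2, ∑ s : ZMod 2, ∑ r : ZMod 2,
          chi (h x y s r + (∑ i, a i * x i) + (∑ j, b j * y j) + γ * s + δ * r))
      = chi (γ*δ) *
        (walsh (fun x => f1 x + (f1 x + f2 x)*δ + (f1 x + f3 x)*γ) a *
           walsh (fun y => g1 y + (g1 y + g3 y)*δ + (g1 y + g2 y)*γ) b
         + walsh (fun x => f1 x + (f1 x + f2 x)*δ + (f1 x + f3 x)*γ) a *
           walsh (fun y => g1 y + (g1 y + g3 y)*δ + (g1 y + g2 y)*(γ+1)) b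
         + walsh (fun x => f1 x + (f1 x + f2 x)*(δ+1) + (f1 x + f3 x)*γ) a *
           walsh (fun y => g1 y + (g1 y + g3 y)*δ + (g1 y + g2 y)*γ) b
         - walsh (fun x => f1 x + (f1 x + f2 x)*(δ+1) + (f1 x + f3 x)*γ) a *
           walsh (fun y => g1 y + (g1 y + g3 y)*δ + (g1 y + g2 y)*(γ+1)) b) := by
    have e1 : ∀ x y, (∑ s : ZMod 2, ∑ r : ZMod 2,
          chi (h x y s r + (∑ i, a i * x i) + (∑ j, b j * y j) + γ * s + δ * r))
        = chi (γ*δ) *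
          ( chi (f1 x + (f1 x + f2 x)*δ + (f1 x + f3 x)*γ + ∑ i, a i * x i) *
              chi (g1 y + (g1 y + g3 y)*δ + (g1 y + g2 y)*γ + ∑ j, b j * y j)
          + chi (f1 x + (f1 x + f2 x)*δ + (f1 x + f3 x)*γ + ∑ i, a i * x i) *
              chi (g1 y + (g1 y + g3 y)*δ + (g1 y + g2 y)*(γ+1) + ∑ j, b j * y j)
          + chi (f1 x + (f1 x + f2 x)*(δ+1) + (f1 x + f3 x)*γ + ∑ i, a i * x i) *
              chi (g1 y + (g1 y + g3 y)*δ + (g1 y + g2 y)*γ + ∑ j, b j * y j)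
          - chi (f1 x + (f1 x + f2 x)*(δ+1) + (f1 x + f3 x)*γ + ∑ i, a i * x i) *
              chi (g1 y + (g1 y + g3 y)*δ + (g1 y + g2 y)*(γ+1) + ∑ j, b j * y j) ) := by
      intro x y
      simp only [hh]
      exact key (f1 x) (f2 x) (f3 x) (g1 y) (g2 y) (g3 y) γ δ _ _
    rw [Finset.sum_congr rfl fun x _ => Finset.sum_congr rfl fun y _ => e1 x y]
    simp only [walsh, Finset.sum_mul_sum, ← Finset.sum_add_distrib, ← Finset.sum_sub_distrib,
      Finset.mul_sum]
    rw [Finset.sum_comm]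
    refine Finset.sum_congr rfl fun y _ => ?_
    simp only [← Finset.sum_add_distrib, ← Finset.sum_sub_distrib, Finset.sum_mul,
      Finset.mul_sum]
  -- bentness of the four auxiliary functions
  have auxF : ∀ σ τ : ZMod 2,
      walsh (fun x => f1 x + (f1 x + f2 x)*σ + (f1 x + f3 x)*τ) a = 2^(n/2) ∨
      walsh (fun x => f1 x + (f1 x + f2 x)*σ + (f1 x + f3 x)*τ) a = -(2^(n/2)) := by
    intro σ τ
    rcases zmod2_cases σ with rfl|rfl <;> rcases zmod2_cases τ with rfl|rfl
    · have e : walsh (fun x => f1 x + (f1 x + f2 x)*(0:ZMod 2) + (f1 x + f3 x)*(0:ZMod 2)) a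
          = walsh f1 a := Finset.sum_congr rfl fun x _ => by
        have : f1 x + (f1 x + f2 x)*(0:ZMod 2) + (f1 x + f3 x)*(0:ZMod 2) = f1 x := by
          generalize f1 x = p; generalize f2 x = q; generalize f3 x = r; revert p q r; decide
        beta_reduce; rw [this]
      rw [e]; exact hf1 a
    · have e : walsh (fun x => f1 x + (f1 x + f2 x)*(0:ZMod 2) + (f1 x + f3 x)*(1:ZMod 2)) a
          = walsh f3 a := Finset.sum_congr rfl fun x _ => by
        have : f1 x + (f1 x + f2 x)*(0:ZMod 2) + (f1 x + f3 x)*(1:ZMod 2) = f3 x := by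
          generalize f1 x = p; generalize f2 x = q; generalize f3 x = r; revert p q r; decide
        beta_reduce; rw [this]
      rw [e]; exact hf3 a
    · have e : walsh (fun x => f1 x + (f1 x + f2 x)*(1:ZMod 2) + (f1 x + f3 x)*(0:ZMod 2)) a
          = walsh f2 a := Finset.sum_congr rfl fun x _ => by
        have : f1 x + (f1 x + f2 x)*(1:ZMod 2) + (f1 x + f3 x)*(0:ZMod 2) = f2 x := by
          generalize f1 x = p; generalize f2 x = q; generalize f3 x = r; revert p q r; decide
        beta_reduce; rw [this]
      rw [e]; exact hf2 a
    · have e : walsh (fun x => f1 x + (f1 x + f2 x)*(1:ZMod 2) + (f1 x + f3 x)*(1:ZMod 2)) a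
          = walsh (fun x => f1 x + f2 x + f3 x) a := Finset.sum_congr rfl fun x _ => by
        have : f1 x + (f1 x + f2 x)*(1:ZMod 2) + (f1 x + f3 x)*(1:ZMod 2)
            = f1 x + f2 x + f3 x := by
          generalize f1 x = p; generalize f2 x = q; generalize f3 x = r; revert p q r; decide
        beta_reduce; rw [this]
      rw [e]; exact hf123 a
  have auxG : ∀ σ τ : ZMod 2,
      walsh (fun y => g1 y + (g1 y + g3 y)*σ + (g1 y + g2 y)*τ) b = 2^(m/2) ∨
      walsh (fun y => g1 y + (g1 y + g3 y)*σ + (g1 y + g2 y)*τ) b = -(2^(m/2)) := by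
    intro σ τ
    rcases zmod2_cases σ with rfl|rfl <;> rcases zmod2_cases τ with rfl|rfl
    · have e : walsh (fun y => g1 y + (g1 y + g3 y)*(0:ZMod 2) + (g1 y + g2 y)*(0:ZMod 2)) b
          = walsh g1 b := Finset.sum_congr rfl fun y _ => by
        have : g1 y + (g1 y + g3 y)*(0:ZMod 2) + (g1 y + g2 y)*(0:ZMod 2) = g1 y := by
          generalize g1 y = p; generalize g2 y = q; generalize g3 y = r; revert p q r; decide
        beta_reduce; rw [this]
      rw [e]; exact hg1 b
    · have e : walsh (fun y => g1 y + (g1 y + g3 y)*(0:ZMod 2) + (g1 y + g2 y)*(1:ZMod 2)) b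
          = walsh g2 b := Finset.sum_congr rfl fun y _ => by
        have : g1 y + (g1 y + g3 y)*(0:ZMod 2) + (g1 y + g2 y)*(1:ZMod 2) = g2 y := by
          generalize g1 y = p; generalize g2 y = q; generalize g3 y = r; revert p q r; decide
        beta_reduce; rw [this]
      rw [e]; exact hg2 b
    · have e : walsh (fun y => g1 y + (g1 y + g3 y)*(1:ZMod 2) + (g1 y + g2 y)*(0:ZMod 2)) b
          = walsh g3 b := Finset.sum_congr rfl fun y _ => by
        have : g1 y + (g1 y + g3 y)*(1:ZMod 2) + (g1 y + g2 y)*(0:ZMod 2) = g3 y := by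
          generalize g1 y = p; generalize g2 y = q; generalize g3 y = r; revert p q r; decide
        beta_reduce; rw [this]
      rw [e]; exact hg3 b
    · have e : walsh (fun y => g1 y + (g1 y + g3 y)*(1:ZMod 2) + (g1 y + g2 y)*(1:ZMod 2)) b
          = walsh (fun y => g1 y + g2 y + g3 y) b := Finset.sum_congr rfl fun y _ => by
        have : g1 y + (g1 y + g3 y)*(1:ZMod 2) + (g1 y + g2 y)*(1:ZMod 2)
            = g1 y + g2 y + g3 y := by
          generalize g1 y = p; generalize g2 y = q; generalize g3 y = r; revert p q r; decide
        beta_reduce; rw [this]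
      rw [e]; exact hg123 b
  rw [step, epow n m hn hm]
  exact combine _ _ _ _ _ _ _ (chi_pm (γ*δ)) (auxF δ γ) (auxF (δ+1) γ) (auxG δ γ)
    (auxG δ (γ+1))
end

section
/- Let n, m ≥ 1 and let f₁, f₂, f₃ : 𝔽₂ⁿ → 𝔽₂ and g₁, g₂, g₃ : 𝔽₂^m → 𝔽₂ be arbitrary Boolean functions. Define f : 𝔽₂ⁿ × 𝔽₂^m → 𝔽₂ by f(x,y) = f₁(x) ⊕ g₁(y) ⊕ (f₁(x)⊕f₂(x))(g₁(y)⊕g₂(y)) ⊕ (f₂(x)⊕f₃(x))(g₂(y)⊕g₃(y)), and set ν₁ = f₁⊕f₂⊕f₃, ν₂ = g₁⊕g₂⊕g₃. Then for every α ∈ 𝔽₂ⁿ and β ∈ 𝔽₂^m: 4·W_f(α,β) = W_{g₁}(β)·[W_{f₁}(α) + W_{f₂}(α) + W_{f₃}(α) + W_{ν₁}(α)] + W_{g₂}(β)·[W_{f₁}(α) − W_{f₂}(α) − W_{f₃}(α) + W_{ν₁}(α)] + W_{g₃}(β)·[W_{f₁}(α) − W_{f₂}(α) + W_{f₃}(α)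 − W_{ν₁}(α)] + W_{ν₂}(β)·[W_{f₁}(α) + W_{f₂}(α) − W_{f₃}(α) − W_{ν₁}(α)]. -/
open Finset

theorem chi_key_s12 : ∀ a1 a2 a3 b1 b2 b3 A B : ZMod 2,
    4 * chi (a1 + b1 + (a1 + a2) * (b1 + b2) + (a2 + a3) * (b2 + b3) + A + B) =
    chi (b1 + B) * (chi (a1 + A) + chi (a2 + A) + chi (a3 + A) + chi (a1 + a2 + a3 + A)) +
    chi (b2 + B) * (chi (a1 + A) - chi (a2 + A) - chi (a3 + A) + chi (a1 + a2 + a3 + A)) +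
    chi (b3 + B) * (chi (a1 + A) - chi (a2 + A) + chi (a3 + A) - chi (a1 + a2 + a3 + A)) +
    chi (b1 + b2 + b3 + B) *
      (chi (a1 + A) + chi (a2 + A) - chi (a3 + A) - chi (a1 + a2 + a3 + A)) := by
  decide

/-- Walsh transform formula for the generalized indirect sum of six
arbitrary Boolean functions. -/
theorem walsh_generalized_indirect_sum (n m : ℕ) (hn : 1 ≤ n) (hm : 1 ≤ m)
    (f1 f2 f3 : (Fin n → ZMod 2) → ZMod 2)
    (g1 g2 g3 : (Fin m → ZMod 2) → ZMod 2)
    (f : (Fin n → ZMod 2) → (Fin m → ZMod 2) → ZMod 2)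
    (hf : ∀ x y,
      f x y = f1 x + g1 y + (f1 x + f2 x) * (g1 y + g2 y) + (f2 x + f3 x) * (g2 y + g3 y))
    (ν1 : (Fin n → ZMod 2) → ZMod 2) (hν1 : ∀ x, ν1 x = f1 x + f2 x + f3 x)
    (ν2 : (Fin m → ZMod 2) → ZMod 2) (hν2 : ∀ y, ν2 y = g1 y + g2 y + g3 y) :
    ∀ (α : Fin n → ZMod 2) (β : Fin m → ZMod 2),
      4 * walsh2 f α β =
        walsh g1 β * (walsh f1 α + walsh f2 α + walsh f3 α + walsh ν1 α) +
        walsh g2 β * (walsh f1 α - walsh f2 α - walsh f3 α + walsh ν1 α) +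
        walsh g3 β * (walsh f1 α - walsh f2 α + walsh f3 α - walsh ν1 α) +
        walsh ν2 β * (walsh f1 α + walsh f2 α - walsh f3 α - walsh ν1 α) := by
  intro α β
  simp only [walsh2, walsh, hf, hν1, hν2]
  rw [Finset.mul_sum]
  simp only [Finset.mul_sum]
  have : ∀ x : Fin n → ZMod 2, ∀ y : Fin m → ZMod 2,
      4 * chi (f1 x + g1 y + (f1 x + f2 x) * (g1 y + g2 y) + (f2 x + f3 x) * (g2 y + g3 y)
          + (∑ i, α i * x i) + (∑ j, β j * y j)) =
      chi (g1 y + ∑ j, β j * y j) *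
        (chi (f1 x + ∑ i, α i * x i) + chi (f2 x + ∑ i, α i * x i) +
          chi (f3 x + ∑ i, α i * x i) + chi (f1 x + f2 x + f3 x + ∑ i, α i * x i)) +
      chi (g2 y + ∑ j, β j * y j) *
        (chi (f1 x + ∑ i, α i * x i) - chi (f2 x + ∑ i, α i * x i) -
          chi (f3 x + ∑ i, α i * x i) + chi (f1 x + f2 x + f3 x + ∑ i, α i * x i)) +
      chi (g3 y + ∑ j, β j * y j) *
        (chi (f1 x + ∑ i, α i * x i) - chi (f2 x + ∑ i, α i * x i) +
          chi (f3 x + ∑ i, α i * x i) - chi (f1 x + f2 x + f3 x + ∑ i, α i * x i)) +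
      chi (g1 y + g2 y + g3 y + ∑ j, β j * y j) *
        (chi (f1 x + ∑ i, α i * x i) + chi (f2 x + ∑ i, α i * x i) -
          chi (f3 x + ∑ i, α i * x i) - chi (f1 x + f2 x + f3 x + ∑ i, α i * x i)) := by
    intro x y
    exact chi_key_s12 (f1 x) (f2 x) (f3 x) (g1 y) (g2 y) (g3 y) _ _
  calc ∑ x : Fin n → ZMod 2, ∑ y : Fin m → ZMod 2,
        4 * chi (f1 x + g1 y + (f1 x + f2 x) * (g1 y + g2 y) + (f2 x + f3 x) * (g2 y + g3 y)
          + (∑ i, α i * x i) + (∑ j, β j * y j))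
      = ∑ x : Fin n → ZMod 2, ∑ y : Fin m → ZMod 2,
        (chi (g1 y + ∑ j, β j * y j) *
          (chi (f1 x + ∑ i, α i * x i) + chi (f2 x + ∑ i, α i * x i) +
            chi (f3 x + ∑ i, α i * x i) + chi (f1 x + f2 x + f3 x + ∑ i, α i * x i)) +
        chi (g2 y + ∑ j, β j * y j) *
          (chi (f1 x + ∑ i, α i * x i) - chi (f2 x + ∑ i, α i * x i) -
            chi (f3 x + ∑ i, α i * x i) + chi (f1 x + f2 x + f3 x + ∑ i, α i * x i)) +
        chi (g3 y + ∑ j, β j * y j) *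
          (chi (f1 x + ∑ i, α i * x i) - chi (f2 x + ∑ i, α i * x i) +
            chi (f3 x + ∑ i, α i * x i) - chi (f1 x + f2 x + f3 x + ∑ i, α i * x i)) +
        chi (g1 y + g2 y + g3 y + ∑ j, β j * y j) *
          (chi (f1 x + ∑ i, α i * x i) + chi (f2 x + ∑ i, α i * x i) -
            chi (f3 x + ∑ i, α i * x i) - chi (f1 x + f2 x + f3 x + ∑ i, α i * x i))) := by
        exact Finset.sum_congr rfl fun x _ => Finset.sum_congr rfl fun y _ => this x y
    _ = _ := by
        simp only [Finset.sum_add_distrib, ← Finset.sum_mul]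
        simp only [← Finset.mul_sum, Finset.sum_add_distrib, Finset.sum_sub_distrib]
end
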